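/- Let T be an ω-Calderón–Zygmund operator with kernel size constant C_K and modulus of continuity ω satisfying the Dini condition. Define the grand maximal truncated operator M_T f(x) = sup over cubes Q ∋ x of ess sup_{ξ∈Q} |T(f·χ_{ℝⁿ∖3Q})(ξ)|, and the maximal truncated operator T*f(x) = sup_{ε>0} |∫_{|y−x|>ε} K(x,y) f(y) dy|. Then for all x ∈ ℝⁿ, M_T f(x) ≤ c_n (‖ω‖_Dini + C_K) Mf(x) + T*f(x), where M is the Hardy–Littlewood maximal operator. -/

import Mathlib

noncomputable section
open MeasureTheory ENNReal Set

structure Cube (n : ℕ) where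
  corner : Fin n → ℝ
  side : ℝ
  side_pos : 0 < side

def Cube.set {n : ℕ} (Q : Cube n) : Set (Fin n → ℝ) :=
  {x | ∀ i, Q.corner i ≤ x i ∧ x i < Q.corner i + Q.side}

def Cube.triple {n : ℕ} (Q : Cube n) : Cube n :=
  ⟨fun i => Q.corner i - Q.side, 3 * Q.side, by linarith [Q.side_pos]⟩

/-- The Hardy–Littlewood maximal operator, `ℝ≥0∞`-valued. -/
def maximalFunction {n : ℕ} (f : (Fin n → ℝ) → ℂ) (x : Fin n → ℝ) : ℝ≥0∞ :=
  ⨆ r ∈ Ioi (0 : ℝ), (volume (Metric.ball x r))⁻¹ * ∫⁻ y in Metric.ball x r, ‖f y‖₊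

/-- The grand maximal truncated operator
`M_T f (x) = sup_{Q ∋ x} ess sup_{ξ ∈ Q} |T(f χ_{ℝⁿ∖3Q})(ξ)|`. -/
def grandMaximal {n : ℕ} (T : ((Fin n → ℝ) → ℂ) → (Fin n → ℝ) → ℂ)
    (f : (Fin n → ℝ) → ℂ) (x : Fin n → ℝ) : ℝ≥0∞ :=
  ⨆ Q : Cube n, ⨆ (_ : x ∈ Q.set),
    essSup (fun ξ => (‖T ((Q.triple.setᶜ).indicator f) ξ‖₊ : ℝ≥0∞))
      (volume.restrict Q.set)

/-- The maximal truncated singular integral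
`T⋆ f (x) = sup_{ε>0} |∫_{|y−x|>ε} K(x,y) f(y) dy|`. -/
def maximalTruncation {n : ℕ} (K : (Fin n → ℝ) → (Fin n → ℝ) → ℂ)
    (f : (Fin n → ℝ) → ℂ) (x : Fin n → ℝ) : ℝ≥0∞ :=
  ⨆ ε ∈ Ioi (0 : ℝ), (‖∫ y in {y | ε < dist y x}, K x y * f y‖₊ : ℝ≥0∞)

/-!
Fix a cube `Q ∋ x` of side `s` and `ξ ∈ Q`. As `ξ` lies in the interior of `3Q`, the value
`T(f χ_{(3Q)ᶜ})(ξ)` is the kernel integral over `(3Q)ᶜ`, which we split at `|y - x| = 2s`.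
Beyond it we replace `K(ξ, y)` by `K(x, y)`: the resulting integral is a truncation at `x`,
bounded by `T⋆f(x)`, and the error is bounded on the dyadic annuli `2ᵏ⁺¹s ≤ |y - x| < 2ᵏ⁺²s` by
`ω(2⁻ᵏ⁻¹)` times an average of `|f|`; these values of `ω` sum to at most `2 ‖ω‖_Dini`.
The remaining part of `(3Q)ᶜ` lies in a ball of radius `3s` around `x` and at distance `≥ s`
from `ξ`, so the size bound controls it by `6ⁿ C_K Mf(x)`. The kernel integrals make sense because
`K(z, ·)` is continuous off `z`, by the smoothness condition and `ω(0+) = 0`, which follows from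
the Dini condition.
-/

namespace Cube

variable {n : ℕ} (Q : Cube n)

lemma set_eq_pi : Q.set = univ.pi fun i => Ico (Q.corner i) (Q.corner i + Q.side) := by
  ext y
  simp [Cube.set]

lemma measurableSet_set : MeasurableSet Q.set := by
  rw [set_eq_pi]
  exact .univ_pi fun _ => measurableSet_Ico

lemma set_subset_interior_triple : Q.set ⊆ interior Q.triple.set := by
  rw [set_eq_pi Q.triple, interior_pi_set finite_univ]
  intro ξ hξ i _
  have := hξ i
  simp only [Cube.triple, interior_Ico, mem_Ioo]
  constructor <;> linarith [this.1, this.2, Q.side_pos]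

variable {Q}

lemma dist_le_side {ξ ζ : Fin n → ℝ} (hξ : ξ ∈ Q.set) (hζ : ζ ∈ Q.set) : dist ξ ζ ≤ Q.side :=
  (dist_pi_le_iff Q.side_pos.le).2 fun i => by
    rw [Real.dist_eq, abs_sub_le_iff]
    constructor <;> linarith [(hξ i).1, (hξ i).2, (hζ i).1, (hζ i).2]

lemma dist_le_two_mul_side_of_mem_triple {x y : Fin n → ℝ} (hx : x ∈ Q.set)
    (hy : y ∈ Q.triple.set) : dist y x ≤ 2 * Q.side :=
  (dist_pi_le_iff (by linarith [Q.side_pos])).2 fun i => by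
    have hyi := hy i
    simp only [Cube.triple] at hyi
    rw [Real.dist_eq, abs_sub_le_iff]
    constructor <;> linarith [hyi.1, hyi.2, (hx i).1, (hx i).2]

lemma side_le_dist_of_notMem_triple {ξ y : Fin n → ℝ} (hξ : ξ ∈ Q.set) (hy : y ∉ Q.triple.set) :
    Q.side ≤ dist ξ y := by
  simp only [Cube.set, Cube.triple, mem_ofPred_eq, not_forall] at hy
  obtain ⟨i, hi⟩ := hy
  refine le_trans ?_ (dist_le_pi_dist ξ y i)
  rw [Real.dist_eq, le_abs]
  by_cases h : Q.corner i - Q.side ≤ y i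
  · right
    linarith [not_lt.1 fun h' => hi ⟨h, h'⟩, (hξ i).2]
  · left
    linarith [(hξ i).1]

end Cube

section Dini

lemma inv_two_pow_mem_Icc (k : ℕ) : (2⁻¹ : ℝ) ^ k ∈ Icc 0 1 :=
  ⟨by positivity, pow_le_one₀ (by norm_num) (by norm_num)⟩

variable {ω : ℝ → ℝ}

lemma log_two_mul_le_setIntegral_div (hmono : MonotoneOn ω (Icc 0 1)) {a b : ℝ} (ha : 0 < a)
    (hab : b = 2 * a) (hb : b ≤ 1) (hint : IntegrableOn (fun t => ω t / t) (Ioc a b)) :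
    Real.log 2 * ω a ≤ ∫ t in Ioc a b, ω t / t := by
  subst hab
  have hinv : IntegrableOn (fun t : ℝ => ω a * t⁻¹) (Ioc a (2 * a)) :=
    ((continuousOn_inv₀.mono fun t ht => (ha.trans_le ht.1).ne').const_smul (ω a)
      |>.integrableOn_Icc).mono_set Ioc_subset_Icc_self
  calc Real.log 2 * ω a = ∫ t in Ioc a (2 * a), ω a * t⁻¹ := by
        rw [integral_const_mul, ← intervalIntegral.integral_of_le (by linarith),
          integral_inv_of_pos ha (by linarith), mul_div_cancel_right₀ _ ha.ne', mul_comm]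
    _ ≤ ∫ t in Ioc a (2 * a), ω t / t := by
        refine setIntegral_mono_on hinv hint measurableSet_Ioc fun t ht => ?_
        have ht0 : 0 < t := ha.trans ht.1
        rw [div_eq_mul_inv]
        gcongr
        exact hmono ⟨ha.le, by linarith⟩ ⟨ht0.le, ht.2.trans hb⟩ ht.1.le

lemma sum_setIntegral_Ioc_dyadic (hint : IntegrableOn (fun t => ω t / t) (Ioc 0 1)) (N : ℕ) :
    ∑ k ∈ Finset.range N, ∫ t in Ioc ((2⁻¹ : ℝ) ^ (k + 1)) (2⁻¹ ^ k), ω t / t =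
      ∫ t in Ioc ((2⁻¹ : ℝ) ^ N) 1, ω t / t := by
  induction N with
  | zero => simp
  | succ N ih =>
    have hle : (2⁻¹ : ℝ) ^ (N + 1) ≤ 2⁻¹ ^ N :=
      pow_le_pow_of_le_one (by norm_num) (by norm_num) N.le_succ
    have h1 := (inv_two_pow_mem_Icc N).2
    rw [Finset.sum_range_succ, ih, ← Ioc_union_Ioc_eq_Ioc hle h1,
      setIntegral_union (Ioc_disjoint_Ioc_of_le le_rfl) measurableSet_Ioc
        (hint.mono_set (Ioc_subset_Ioc (by positivity) h1))
        (hint.mono_set (Ioc_subset_Ioc (by positivity) le_rfl)), add_comm]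

-- The factor `2` bounds `1 / log 2`.
lemma sum_dyadic_le_two_mul_dini (hmono : MonotoneOn ω (Icc 0 1))
    (hnn : ∀ t ∈ Icc (0 : ℝ) 1, 0 ≤ ω t) (hint : IntegrableOn (fun t => ω t / t) (Ioc 0 1))
    (N : ℕ) :
    ∑ k ∈ Finset.range N, ω ((2⁻¹ : ℝ) ^ (k + 1)) ≤ 2 * ∫ t in Ioc (0 : ℝ) 1, ω t / t := by
  have hlog : Real.log 2 * ∑ k ∈ Finset.range N, ω ((2⁻¹ : ℝ) ^ (k + 1)) ≤
      ∫ t in Ioc (0 : ℝ) 1, ω t / t :=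
    calc _ = ∑ k ∈ Finset.range N, Real.log 2 * ω ((2⁻¹ : ℝ) ^ (k + 1)) := Finset.mul_sum _ _ _
      _ ≤ ∑ k ∈ Finset.range N, ∫ t in Ioc ((2⁻¹ : ℝ) ^ (k + 1)) (2⁻¹ ^ k), ω t / t := by
          gcongr with k
          exact log_two_mul_le_setIntegral_div hmono (by positivity) (by rw [pow_succ]; ring)
            (inv_two_pow_mem_Icc k).2
            (hint.mono_set (Ioc_subset_Ioc (by positivity) (inv_two_pow_mem_Icc k).2))
      _ = ∫ t in Ioc ((2⁻¹ : ℝ) ^ N) 1, ω t / t := sum_setIntegral_Ioc_dyadic hint N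
      _ ≤ ∫ t in Ioc (0 : ℝ) 1, ω t / t := by
          refine setIntegral_mono_set hint ?_ (Ioc_subset_Ioc (by positivity) le_rfl).eventuallyLE
          filter_upwards [ae_restrict_mem measurableSet_Ioc] with t ht
          exact div_nonneg (hnn t (Ioc_subset_Icc_self ht)) ht.1.le
  have hsum_nonneg : 0 ≤ ∑ k ∈ Finset.range N, ω ((2⁻¹ : ℝ) ^ (k + 1)) :=
    Finset.sum_nonneg fun k _ => hnn _ (inv_two_pow_mem_Icc _)
  nlinarith [Real.log_two_gt_d9]

lemma exists_lt_of_summable_dyadic (hsum : Summable fun k : ℕ => ω ((2⁻¹ : ℝ) ^ (k + 1)))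
    {η : ℝ} (hη : 0 < η) : ∃ u ∈ Ioc (0 : ℝ) 1, ω u < η := by
  obtain ⟨k, hk⟩ := (hsum.tendsto_atTop_zero.eventually_lt_const hη).exists
  exact ⟨_, ⟨by positivity, (inv_two_pow_mem_Icc _).2⟩, hk⟩

end Dini

section Kernel

variable {n : ℕ}

def KernelSizeBound (K : (Fin n → ℝ) → (Fin n → ℝ) → ℂ) (CK : ℝ) : Prop :=
  ∀ x y : Fin n → ℝ, x ≠ y → ‖K x y‖ ≤ CK / dist x y ^ n

def KernelSmoothFst (K : (Fin n → ℝ) → (Fin n → ℝ) → ℂ) (ω : ℝ → ℝ) : Prop :=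
  ∀ x x' y : Fin n → ℝ, 2 * dist x x' < dist x y →
    ‖K x y - K x' y‖ ≤ ω (dist x x' / dist x y) / dist x y ^ n

def KernelSmoothSnd (K : (Fin n → ℝ) → (Fin n → ℝ) → ℂ) (ω : ℝ → ℝ) : Prop :=
  ∀ x x' y : Fin n → ℝ, 2 * dist x x' < dist x y →
    ‖K y x - K y x'‖ ≤ ω (dist x x' / dist x y) / dist x y ^ n

variable {K : (Fin n → ℝ) → (Fin n → ℝ) → ℂ} {CK : ℝ}

lemma continuousOn_kernel {ω : ℝ → ℝ} (hmono : MonotoneOn ω (Icc 0 1))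
    (hsmall : ∀ η > 0, ∃ u ∈ Ioc (0 : ℝ) 1, ω u < η) (hsmooth : KernelSmoothSnd K ω)
    (z : Fin n → ℝ) : ContinuousOn (K z) {y | y ≠ z} := by
  intro y₀ hy₀
  refine ContinuousAt.continuousWithinAt (Metric.continuousAt_iff.2 fun ε hε => ?_)
  set d := dist y₀ z
  have hd : 0 < d := dist_pos.2 hy₀
  obtain ⟨u, ⟨hu0, hu1⟩, hωu⟩ := hsmall (ε * d ^ n) (by positivity)
  refine ⟨min (u * d) (d / 2), by positivity, fun y hy => ?_⟩
  rw [dist_comm] at hy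
  have hyu : dist y₀ y / d ≤ u := (div_le_iff₀ hd).2 (lt_of_lt_of_le hy (min_le_left _ _)).le
  calc dist (K z y) (K z y₀) = ‖K z y₀ - K z y‖ := by rw [dist_eq_norm, norm_sub_rev]
    _ ≤ ω (dist y₀ y / d) / d ^ n :=
        hsmooth y₀ y z (by linarith [lt_of_lt_of_le hy (min_le_right _ _)])
    _ ≤ ω u / d ^ n := by
        gcongr
        exact hmono ⟨by positivity, hyu.trans hu1⟩ ⟨hu0.le, hu1⟩ hyu
    _ < ε := by rwa [div_lt_iff₀ (by positivity)]

lemma norm_kernel_le_of_le_dist (hsize : KernelSizeBound K CK) (hCK : 0 ≤ CK) {s : ℝ} (hs : 0 < s) {z y : Fin n → ℝ} (h : s ≤ dist z y) :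
    ‖K z y‖ ≤ CK / s ^ n :=
  (hsize z y fun he => by simp [he] at h; linarith).trans (by gcongr)

lemma integrableOn_kernel_mul {z : Fin n → ℝ} (hKz : ContinuousOn (K z) {y | y ≠ z})
    (hsize : KernelSizeBound K CK) (hCK : 0 ≤ CK)
    {f : (Fin n → ℝ) → ℂ} (hf : Integrable f) {S : Set (Fin n → ℝ)} (hS : MeasurableSet S)
    {s : ℝ} (hs : 0 < s) (hfar : ∀ y ∈ S, s ≤ dist z y) :
    IntegrableOn (fun y => K z y * f y) S := by
  have hne : S ⊆ {y | y ≠ z} := fun y hy he => by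
    have := hfar y hy
    simp [he] at this
    linarith
  refine Integrable.mono' ((hf.norm.const_mul (CK / s ^ n)).integrableOn)
    (((hKz.mono hne).aestronglyMeasurable hS).mul hf.1.restrict) ?_
  filter_upwards [ae_restrict_mem hS] with y hy
  rw [norm_mul]
  gcongr
  exact norm_kernel_le_of_le_dist hsize hCK hs (hfar y hy)

end Kernel

section Maximal

variable {n : ℕ} {f : (Fin n → ℝ) → ℂ} {x : Fin n → ℝ}

lemma lintegral_ball_le_maximalFunction {r : ℝ} (hr : 0 < r) :
    ∫⁻ y in Metric.ball x r, ‖f y‖ₑ ≤ ENNReal.ofReal (2 * r) ^ n * maximalFunction f x := by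
  have hvol : volume (Metric.ball x r) = ENNReal.ofReal (2 * r) ^ n := by
    simp [volume_pi_ball x hr, Real.volume_ball]
  have hne : ENNReal.ofReal (2 * r) ^ n ≠ 0 := pow_ne_zero _ (by simp [hr])
  have hfin : ENNReal.ofReal (2 * r) ^ n ≠ ⊤ := pow_ne_top ofReal_ne_top
  rw [← ENNReal.inv_mul_le_iff hne hfin, ← hvol]
  exact le_biSup (fun r => (volume (Metric.ball x r))⁻¹ * ∫⁻ y in Metric.ball x r, ‖f y‖ₑ)
    (mem_Ioi.2 hr)

lemma setLIntegral_mul_le_maximalFunction {G : (Fin n → ℝ) → ℂ} {S : Set (Fin n → ℝ)}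
    (hS : MeasurableSet S) {r : ℝ} (hr : 0 < r) (hSr : S ⊆ Metric.ball x r) {C : ℝ}
    (hG : ∀ y ∈ S, ‖G y‖ ≤ C) :
    ∫⁻ y in S, ‖G y * f y‖ₑ ≤ ENNReal.ofReal (C * (2 * r) ^ n) * maximalFunction f x := by
  calc ∫⁻ y in S, ‖G y * f y‖ₑ ≤ ∫⁻ y in S, ENNReal.ofReal C * ‖f y‖ₑ := by
        refine setLIntegral_mono' hS fun y hy => ?_
        rw [enorm_mul, ← ofReal_norm]
        gcongr
        exact hG y hy
    _ ≤ ENNReal.ofReal C * ∫⁻ y in Metric.ball x r, ‖f y‖ₑ := by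
        rw [lintegral_const_mul' _ _ ofReal_ne_top]
        gcongr
    _ ≤ ENNReal.ofReal C * (ENNReal.ofReal (2 * r) ^ n * maximalFunction f x) := by
        gcongr
        exact lintegral_ball_le_maximalFunction hr
    _ = ENNReal.ofReal (C * (2 * r) ^ n) * maximalFunction f x := by
        rw [ofReal_mul' (q := (2 * r) ^ n) (by positivity), ofReal_pow (by positivity), mul_assoc]

lemma enorm_setIntegral_le_maximalTruncation (K : (Fin n → ℝ) → (Fin n → ℝ) → ℂ) {ε : ℝ}
    (hε : 0 < ε) : ‖∫ y in {y | ε < dist y x}, K x y * f y‖ₑ ≤ maximalTruncation K f x :=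
  le_biSup (fun ε => (‖∫ y in {y | ε < dist y x}, K x y * f y‖₊ : ℝ≥0∞)) (mem_Ioi.2 hε)

end Maximal

lemma measurableSet_setOf_lt_dist {X : Type*} [PseudoMetricSpace X] [MeasurableSpace X]
    [OpensMeasurableSpace X] (x : X) (ε : ℝ) : MeasurableSet {y | ε < dist y x} :=
  (isOpen_lt continuous_const (continuous_id.dist continuous_const)).measurableSet

section CubeEstimates

variable {n : ℕ} {K : (Fin n → ℝ) → (Fin n → ℝ) → ℂ} {CK : ℝ} {ω : ℝ → ℝ}
  {f : (Fin n → ℝ) → ℂ} {x ξ : Fin n → ℝ} {s : ℝ}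

lemma norm_kernel_sub_le_of_le_dist (hmono : MonotoneOn ω (Icc 0 1))
    (hnn : ∀ t ∈ Icc (0 : ℝ) 1, 0 ≤ ω t) (hsmooth : KernelSmoothFst K ω) {y : Fin n → ℝ} (hξ : dist x ξ ≤ s) (hy : 2 * s < dist x y) {r t : ℝ} (hr : 0 < r)
    (hry : r ≤ dist x y) (hst : s ≤ t * r) (ht1 : t ≤ 1) :
    ‖K ξ y - K x y‖ ≤ ω t / r ^ n := by
  have hratio : dist x ξ / dist x y ≤ t := by
    rw [div_le_iff₀ (hr.trans_le hry)]
    nlinarith [dist_nonneg (x := x) (y := ξ)]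
  have ht0 : 0 ≤ t := by nlinarith [dist_nonneg (x := x) (y := ξ)]
  rw [norm_sub_rev]
  calc ‖K x y - K ξ y‖ ≤ ω (dist x ξ / dist x y) / dist x y ^ n := hsmooth x ξ y (by linarith)
    _ ≤ ω t / r ^ n := by
        gcongr
        · exact hnn t ⟨ht0, ht1⟩
        · exact hmono ⟨by positivity, hratio.trans ht1⟩ ⟨ht0, ht1⟩ hratio

def dyadicAnnulus (x : Fin n → ℝ) (s : ℝ) (k : ℕ) : Set (Fin n → ℝ) :=
  Metric.ball x (2 ^ (k + 2) * s) \ Metric.ball x (2 ^ (k + 1) * s)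

lemma measurableSet_dyadicAnnulus (k : ℕ) : MeasurableSet (dyadicAnnulus x s k) :=
  measurableSet_ball.diff measurableSet_ball

lemma subset_iUnion_dyadicAnnulus (hs : 0 < s) :
    {y | 2 * s ≤ dist y x} ⊆ ⋃ k, dyadicAnnulus x s k := by
  intro y hy
  obtain ⟨k, hk, hk'⟩ := exists_nat_pow_near (x := dist y x / (2 * s)) (y := 2)
    ((one_le_div (by positivity)).2 hy) one_lt_two
  rw [le_div_iff₀ (by positivity)] at hk
  rw [div_lt_iff₀ (by positivity)] at hk'
  refine mem_iUnion.2 ⟨k, ?_, ?_⟩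
  · rw [Metric.mem_ball]
    linarith [show (2 : ℝ) ^ (k + 2) * s = 2 ^ (k + 1) * (2 * s) by ring]
  · rw [Metric.mem_ball, not_lt]
    linarith [show (2 : ℝ) ^ (k + 1) * s = 2 ^ k * (2 * s) by ring]

-- The annuli are intersected with `2 s < |y - x|` because the smoothness condition needs this
-- strict inequality, which the innermost annulus alone does not give.
lemma setLIntegral_dyadicAnnulus_kernel_sub_le (hmono : MonotoneOn ω (Icc 0 1))
    (hnn : ∀ t ∈ Icc (0 : ℝ) 1, 0 ≤ ω t) (hsmooth : KernelSmoothFst K ω) (hs : 0 < s)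
    (hξ : dist x ξ ≤ s) (k : ℕ) :
    ∫⁻ y in {y | 2 * s < dist y x} ∩ dyadicAnnulus x s k, ‖(K ξ y - K x y) * f y‖ₑ ≤
      ENNReal.ofReal (ω ((2⁻¹ : ℝ) ^ (k + 1)) * 4 ^ n) * maximalFunction f x := by
  refine (setLIntegral_mul_le_maximalFunction
    ((measurableSet_setOf_lt_dist x _).inter (measurableSet_dyadicAnnulus k)) (by positivity)
    (inter_subset_right.trans sdiff_subset)
    (C := ω ((2⁻¹ : ℝ) ^ (k + 1)) / (2 ^ (k + 1) * s) ^ n) fun y hy => ?_).trans_eq ?_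
  · obtain ⟨hy, -, hy'⟩ := hy
    rw [Metric.mem_ball, not_lt, dist_comm] at hy'
    rw [mem_ofPred_eq, dist_comm] at hy
    refine norm_kernel_sub_le_of_le_dist hmono hnn hsmooth hξ hy (by positivity) hy' ?_
      (inv_two_pow_mem_Icc _).2
    rw [← mul_assoc, ← mul_pow, inv_mul_cancel₀ two_ne_zero, one_pow, one_mul]
  · rw [show (2 : ℝ) * (2 ^ (k + 2) * s) = 4 * (2 ^ (k + 1) * s) by ring, mul_pow (4 : ℝ),
      mul_comm ((4 : ℝ) ^ n), ← mul_assoc, div_mul_cancel₀ _ (by positivity)]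

lemma setLIntegral_kernel_sub_le (hmono : MonotoneOn ω (Icc 0 1))
    (hnn : ∀ t ∈ Icc (0 : ℝ) 1, 0 ≤ ω t) (hsmooth : KernelSmoothFst K ω)
    (hsum : Summable fun k : ℕ => ω ((2⁻¹ : ℝ) ^ (k + 1))) (hs : 0 < s) (hξ : dist x ξ ≤ s) :
    ∫⁻ y in {y | 2 * s < dist y x}, ‖(K ξ y - K x y) * f y‖ₑ ≤
      ENNReal.ofReal (4 ^ n * ∑' k : ℕ, ω ((2⁻¹ : ℝ) ^ (k + 1))) * maximalFunction f x := by
  have hcover : {y | 2 * s < dist y x} ⊆ ⋃ k, {y | 2 * s < dist y x} ∩ dyadicAnnulus x s k :=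
    fun y hy => inter_iUnion _ _ ▸
      ⟨hy, subset_iUnion_dyadicAnnulus hs (show 2 * s ≤ dist y x from hy.le)⟩
  calc _ ≤ ∫⁻ y in ⋃ k, {y | 2 * s < dist y x} ∩ dyadicAnnulus x s k,
          ‖(K ξ y - K x y) * f y‖ₑ := lintegral_mono_set hcover
    _ ≤ ∑' k, ∫⁻ y in {y | 2 * s < dist y x} ∩ dyadicAnnulus x s k,
          ‖(K ξ y - K x y) * f y‖ₑ := lintegral_iUnion_le _ _
    _ ≤ ∑' k : ℕ, ENNReal.ofReal (ω ((2⁻¹ : ℝ) ^ (k + 1)) * 4 ^ n) * maximalFunction f x :=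
        ENNReal.tsum_le_tsum fun k =>
          setLIntegral_dyadicAnnulus_kernel_sub_le hmono hnn hsmooth hs hξ k
    _ = _ := by
        rw [ENNReal.tsum_mul_right, ← ofReal_tsum_of_nonneg
          (fun k => mul_nonneg (hnn _ (inv_two_pow_mem_Icc _)) (by positivity))
          (hsum.mul_right _), tsum_mul_right, mul_comm (∑' k : ℕ, _)]

lemma enorm_setIntegral_kernel_le_of_near
    (hsize : KernelSizeBound K CK) (hCK : 0 ≤ CK) (hs : 0 < s)
    {S : Set (Fin n → ℝ)} (hS : MeasurableSet S) (hSx : S ⊆ Metric.closedBall x (2 * s))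
    (hfar : ∀ y ∈ S, s ≤ dist ξ y) :
    ‖∫ y in S, K ξ y * f y‖ₑ ≤ ENNReal.ofReal (CK * 6 ^ n) * maximalFunction f x :=
  calc _ ≤ ∫⁻ y in S, ‖K ξ y * f y‖ₑ := enorm_integral_le_lintegral_enorm _
    _ ≤ ENNReal.ofReal (CK / s ^ n * (2 * (3 * s)) ^ n) * maximalFunction f x :=
        setLIntegral_mul_le_maximalFunction hS (by positivity)
          (hSx.trans (Metric.closedBall_subset_ball (by linarith)))
          fun y hy => norm_kernel_le_of_le_dist hsize hCK hs (hfar y hy)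
    _ = _ := by
        rw [show 2 * (3 * s) = 6 * s by ring, mul_pow]
        field_simp

lemma apply_indicator_compl_triple_eq {T : ((Fin n → ℝ) → ℂ) → (Fin n → ℝ) → ℂ}
    (hrep : ∀ (f : (Fin n → ℝ) → ℂ), Integrable f → ∀ x, x ∉ tsupport f →
      T f x = ∫ y, K x y * f y)
    (hsize : KernelSizeBound K CK) (hCK : 0 ≤ CK) (hKcont : ∀ z, ContinuousOn (K z) {y | y ≠ z})
    (hf : Integrable f) {Q : Cube n} (hx : x ∈ Q.set) (hξ : ξ ∈ Q.set) :
    T (Q.triple.setᶜ.indicator f) ξ =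
      (∫ y in {y | 2 * Q.side < dist y x}, (K ξ y - K x y) * f y) +
        (∫ y in {y | 2 * Q.side < dist y x}, K x y * f y) +
        ∫ y in Q.triple.setᶜ \ {y | 2 * Q.side < dist y x}, K ξ y * f y := by
  set U : Set (Fin n → ℝ) := {y | 2 * Q.side < dist y x}
  have hU : MeasurableSet U := measurableSet_setOf_lt_dist x _
  have h3Q : MeasurableSet Q.triple.setᶜ := Q.triple.measurableSet_set.compl
  have hU3Q : U ⊆ Q.triple.setᶜ := fun y hy hy3 =>
    (Cube.dist_le_two_mul_side_of_mem_triple hx hy3).not_gt hy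
  have hIξ : IntegrableOn (fun y => K ξ y * f y) Q.triple.setᶜ :=
    integrableOn_kernel_mul (hKcont ξ) hsize hCK hf h3Q Q.side_pos
      fun y hy => Cube.side_le_dist_of_notMem_triple hξ hy
  have hIx : IntegrableOn (fun y => K x y * f y) U :=
    integrableOn_kernel_mul (hKcont x) hsize hCK hf hU Q.side_pos
      fun y (hy : 2 * Q.side < dist y x) => by rw [dist_comm]; linarith [Q.side_pos]
  have hξ_tsupport : ξ ∉ tsupport (Q.triple.setᶜ.indicator f) :=
    notMem_tsupport_iff_eventuallyEq.2 <| Filter.eventually_of_mem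
      (mem_interior_iff_mem_nhds.1 (Q.set_subset_interior_triple hξ))
      fun y hy => indicator_of_notMem (not_not.2 hy) f
  rw [hrep _ (hf.indicator h3Q) ξ hξ_tsupport]
  simp_rw [← indicator_mul_right]
  rw [integral_indicator h3Q]
  conv_lhs => rw [← union_sdiff_cancel hU3Q]
  simp_rw [sub_mul]
  rw [setIntegral_union disjoint_sdiff_right (h3Q.diff hU) (hIξ.mono_set hU3Q)
    (hIξ.mono_set sdiff_subset), integral_sub (hIξ.mono_set hU3Q) hIx, sub_add_cancel]

lemma enorm_apply_indicator_compl_triple_le {T : ((Fin n → ℝ) → ℂ) → (Fin n → ℝ) → ℂ}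
    (hrep : ∀ (f : (Fin n → ℝ) → ℂ), Integrable f → ∀ x, x ∉ tsupport f →
      T f x = ∫ y, K x y * f y)
    (hsize : KernelSizeBound K CK) (hCK : 0 ≤ CK) (hKcont : ∀ z, ContinuousOn (K z) {y | y ≠ z})
    (hmono : MonotoneOn ω (Icc 0 1)) (hnn : ∀ t ∈ Icc (0 : ℝ) 1, 0 ≤ ω t)
    (hsmooth : KernelSmoothFst K ω) (hsum : Summable fun k : ℕ => ω ((2⁻¹ : ℝ) ^ (k + 1)))
    (hf : Integrable f) {Q : Cube n} (hx : x ∈ Q.set) (hξ : ξ ∈ Q.set) :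
    ‖T (Q.triple.setᶜ.indicator f) ξ‖ₑ ≤
      ENNReal.ofReal (4 ^ n * ∑' k : ℕ, ω ((2⁻¹ : ℝ) ^ (k + 1)) + CK * 6 ^ n) *
        maximalFunction f x + maximalTruncation K f x := by
  have hs := Q.side_pos
  have hnear : Q.triple.setᶜ \ {y | 2 * Q.side < dist y x} ⊆ Metric.closedBall x (2 * Q.side) :=
    fun y hy => Metric.mem_closedBall.2 (not_lt.1 hy.2)
  rw [apply_indicator_compl_triple_eq hrep hsize hCK hKcont hf hx hξ]
  refine ((enorm_add_le _ _).trans (add_le_add (enorm_add_le _ _) le_rfl)).trans ?_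
  rw [ofReal_add (mul_nonneg (by positivity)
    (tsum_nonneg fun k => hnn _ (inv_two_pow_mem_Icc (k + 1)))) (by positivity), add_mul,
    add_right_comm]
  refine add_le_add (add_le_add ?_ ?_) (enorm_setIntegral_le_maximalTruncation K (by linarith))
  · exact (enorm_integral_le_lintegral_enorm _).trans
      (setLIntegral_kernel_sub_le hmono hnn hsmooth hsum hs (Cube.dist_le_side hx hξ))
  · exact enorm_setIntegral_kernel_le_of_near hsize hCK hs
      (Q.triple.measurableSet_set.compl.diff (measurableSet_setOf_lt_dist x _)) hnear
      fun y hy => Cube.side_le_dist_of_notMem_triple hξ hy.1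

end CubeEstimates

/-- for an `ω`-Calderón–Zygmund operator `T` with Dini modulus `ω` and size
constant `C_K`, the pointwise bound
`M_T f (x) ≤ c_n (‖ω‖_Dini + C_K) M f (x) + T⋆ f (x)` holds for all `x`. -/
theorem grand_maximal_pointwise_bound (n : ℕ) :
    ∃ c : ℝ, 0 < c ∧
      ∀ (ω : ℝ → ℝ), MonotoneOn ω (Icc 0 1) → (∀ t ∈ Icc (0:ℝ) 1, 0 ≤ ω t) → ω 0 = 0 →
        (∀ s t : ℝ, 0 ≤ s → 0 ≤ t → s + t ≤ 1 → ω (s + t) ≤ ω s + ω t) →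
        IntegrableOn (fun t => ω t / t) (Ioc (0:ℝ) 1) →
      ∀ (T : ((Fin n → ℝ) → ℂ) → (Fin n → ℝ) → ℂ)
        (K : (Fin n → ℝ) → (Fin n → ℝ) → ℂ) (CK : ℝ), 0 ≤ CK →
        (∀ (f : (Fin n → ℝ) → ℂ), Integrable f → ∀ x, x ∉ tsupport f →
          T f x = ∫ y, K x y * f y) →
        (∀ x y : Fin n → ℝ, x ≠ y → ‖K x y‖ ≤ CK / dist x y ^ n) →
        (∀ x x' y : Fin n → ℝ, 2 * dist x x' < dist x y →
          ‖K x y - K x' y‖ + ‖K y x - K y x'‖ ≤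
            ω (dist x x' / dist x y) / dist x y ^ n) →
      ∀ (f : (Fin n → ℝ) → ℂ), Integrable f →
      ∀ x : Fin n → ℝ,
        grandMaximal T f x ≤
          ENNReal.ofReal (c * ((∫ t in Ioc (0:ℝ) 1, ω t / t) + CK)) * maximalFunction f x
            + maximalTruncation K f x := by
  refine ⟨2 * 6 ^ n, by positivity, ?_⟩
  intro ω hmono hnn _ _ hint T K CK hCK hrep hsize hsm f hf x
  have hsum_le := sum_dyadic_le_two_mul_dini hmono hnn hint
  have hω (k : ℕ) : 0 ≤ ω ((2⁻¹ : ℝ) ^ (k + 1)) := hnn _ (inv_two_pow_mem_Icc _)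
  have hsum : Summable fun k : ℕ => ω ((2⁻¹ : ℝ) ^ (k + 1)) := summable_of_sum_range_le hω hsum_le
  have htsum := hsum.tsum_le_of_sum_range_le hsum_le
  have hfst : KernelSmoothFst K ω :=
    fun x x' y h => (le_add_of_nonneg_right (norm_nonneg _)).trans (hsm x x' y h)
  have hsnd : KernelSmoothSnd K ω :=
    fun x x' y h => (le_add_of_nonneg_left (norm_nonneg _)).trans (hsm x x' y h)
  have hKcont := continuousOn_kernel hmono (fun _ => exists_lt_of_summable_dyadic hsum) hsnd
  refine iSup₂_le fun Q hxQ => essSup_le_of_ae_le _ <|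
    ae_restrict_of_forall_mem Q.measurableSet_set fun ξ hξQ => ?_
  refine (enorm_apply_indicator_compl_triple_le hrep hsize hCK hKcont hmono hnn hfst hsum hf
    hxQ hξQ).trans ?_
  beta_reduce
  gcongr
  have h46 : (4 : ℝ) ^ n ≤ 6 ^ n := pow_le_pow_left₀ (by norm_num) (by norm_num) n
  have hS0 : 0 ≤ ∑' k : ℕ, ω ((2⁻¹ : ℝ) ^ (k + 1)) := tsum_nonneg hω
  nlinarith [mul_le_mul_of_nonneg_right h46 hS0,
    mul_le_mul_of_nonneg_left htsum (by positivity : (0 : ℝ) ≤ 6 ^ n),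
    mul_nonneg hCK (by positivity : (0 : ℝ) ≤ 6 ^ n)]
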